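/- The graphs K₄ ∪ S₄ and K₂ ∪ K₂ ∪ S₄ are locally equienergetic: e(K₄ ∪ S₄) = e(K₂ ∪ K₂ ∪ S₄). -/

import Mathlib

/-! Local energy is additive over disjoint unions: deleting a vertex of one component leaves the
other untouched, and the spectrum of `G ⊕g H` is the union of the spectra of `G` and `H`. So the
star cancels and it remains to see `e(K₄) = 2 e(K₂)`. The adjacency matrix of `Kₙ` is `J - I`,
with spectrum `{n - 1, (-1)^(n - 1)}`; hence `E(Kₙ) = 2(n - 1)` and `e(Kₙ) = n · 2 = 2n` for
`n ≥ 2`. -/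

open SimpleGraph Matrix Finset

noncomputable section

/-- The adjacency matrix of a simple graph over `ℝ` is Hermitian. -/
lemma adjMatrix_isHermitian {V : Type*} [Fintype V] (G : SimpleGraph V)
    [DecidableRel G.Adj] : (G.adjMatrix ℝ).IsHermitian := by
  rw [Matrix.IsHermitian, Matrix.conjTranspose_eq_transpose_of_trivial]
  exact G.isSymm_adjMatrix

/-- The energy of a finite simple graph: the sum of the absolute values of the
eigenvalues of its adjacency matrix. -/
def graphEnergy {V : Type*} [Fintype V] [DecidableEq V] (G : SimpleGraph V) : ℝ :=
  letI := Classical.decRel G.Adj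
  ∑ i, |(adjMatrix_isHermitian G).eigenvalues i|

/-- The local energy of `G` at a vertex `v`: the energy of `G` minus the energy of the
induced subgraph obtained by deleting `v`. -/
def localEnergyAt {V : Type*} [Fintype V] [DecidableEq V] (G : SimpleGraph V) (v : V) : ℝ :=
  graphEnergy G - graphEnergy (G.induce {u | u ≠ v})

/-- The local energy of `G`: the sum of the local energies at all vertices. -/
def localEnergy {V : Type*} [Fintype V] [DecidableEq V] (G : SimpleGraph V) : ℝ :=
  ∑ v, localEnergyAt G v

end

/-- The star graph on 4 vertices: vertex `0` is the center, adjacent to the 3 leaves. -/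
def starGraph4 : SimpleGraph (Fin 4) :=
  SimpleGraph.fromRel fun a _ => a = 0

open Polynomial

lemma Matrix.IsHermitian.sum_abs_eigenvalues_eq_sum_abs_roots {n : Type*} [Fintype n]
    [DecidableEq n] {A : Matrix n n ℝ} (hA : A.IsHermitian) :
    ∑ i, |hA.eigenvalues i| = (A.charpoly.roots.map abs).sum := by
  rw [hA.roots_charpoly_eq_eigenvalues, Multiset.map_map, ← Finset.sum_eq_multiset_sum]
  rfl

namespace SimpleGraph

variable {V W : Type*}

lemma adjMatrix_sum {α : Type*} [Zero α] [One α] (G : SimpleGraph V) (H : SimpleGraph W)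
    [DecidableRel G.Adj] [DecidableRel H.Adj] [DecidableRel (G ⊕g H).Adj] :
    (G ⊕g H).adjMatrix α = Matrix.fromBlocks (G.adjMatrix α) 0 0 (H.adjMatrix α) := by
  ext (a | a) (b | b) <;> simp

variable [Fintype V] [DecidableEq V] [Fintype W] [DecidableEq W]

lemma graphEnergy_eq_sum_abs_roots (G : SimpleGraph V) [DecidableRel G.Adj] :
    graphEnergy G = ((G.adjMatrix ℝ).charpoly.roots.map abs).sum := by
  rw [graphEnergy, Matrix.IsHermitian.sum_abs_eigenvalues_eq_sum_abs_roots]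
  congr

lemma Iso.graphEnergy_eq {G : SimpleGraph V} {H : SimpleGraph W} (e : G ≃g H) :
    graphEnergy G = graphEnergy H := by
  classical
  rw [graphEnergy_eq_sum_abs_roots, graphEnergy_eq_sum_abs_roots, ← e.reindex_adjMatrix ℝ,
    charpoly_reindex]

lemma graphEnergy_sum (G : SimpleGraph V) (H : SimpleGraph W) :
    graphEnergy (G ⊕g H) = graphEnergy G + graphEnergy H := by
  classical
  have hne : (G.adjMatrix ℝ).charpoly * (H.adjMatrix ℝ).charpoly ≠ 0 :=
    ((charpoly_monic _).mul (charpoly_monic _)).ne_zero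
  rw [graphEnergy_eq_sum_abs_roots, graphEnergy_eq_sum_abs_roots, graphEnergy_eq_sum_abs_roots,
    adjMatrix_sum, charpoly_fromBlocks_zero₁₂, roots_mul hne, Multiset.map_add,
    Multiset.sum_add]

def Iso.induceSumInl (G : SimpleGraph V) (H : SimpleGraph W) (v : V) :
    (G ⊕g H).induce {u | u ≠ Sum.inl v} ≃g G.induce {a | a ≠ v} ⊕g H where
  toEquiv := Equiv.subtypeSum.trans <| Equiv.sumCongr
    (Equiv.subtypeEquivRight fun _ => Sum.inl_injective.ne_iff)
    (Equiv.subtypeUnivEquiv fun _ => Sum.inr_ne_inl)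
  map_rel_iff' := by rintro ⟨a | a, ha⟩ ⟨b | b, hb⟩ <;> simp [Equiv.subtypeSum]

def Iso.induceSumInr (G : SimpleGraph V) (H : SimpleGraph W) (w : W) :
    (G ⊕g H).induce {u | u ≠ Sum.inr w} ≃g G ⊕g H.induce {b | b ≠ w} where
  toEquiv := Equiv.subtypeSum.trans <| Equiv.sumCongr
    (Equiv.subtypeUnivEquiv fun _ => Sum.inl_ne_inr)
    (Equiv.subtypeEquivRight fun _ => Sum.inr_injective.ne_iff)
  map_rel_iff' := by rintro ⟨a | a, ha⟩ ⟨b | b, hb⟩ <;> simp [Equiv.subtypeSum]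

lemma localEnergyAt_sum_inl (G : SimpleGraph V) (H : SimpleGraph W) (v : V) :
    localEnergyAt (G ⊕g H) (Sum.inl v) = localEnergyAt G v := by
  rw [localEnergyAt, localEnergyAt, (Iso.induceSumInl G H v).graphEnergy_eq, graphEnergy_sum,
    graphEnergy_sum]
  ring

lemma localEnergyAt_sum_inr (G : SimpleGraph V) (H : SimpleGraph W) (w : W) :
    localEnergyAt (G ⊕g H) (Sum.inr w) = localEnergyAt H w := by
  rw [localEnergyAt, localEnergyAt, (Iso.induceSumInr G H w).graphEnergy_eq, graphEnergy_sum,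
    graphEnergy_sum]
  ring

lemma localEnergy_sum (G : SimpleGraph V) (H : SimpleGraph W) :
    localEnergy (G ⊕g H) = localEnergy G + localEnergy H := by
  simp only [localEnergy, Fintype.sum_sum_type, localEnergyAt_sum_inl, localEnergyAt_sum_inr]

lemma charpoly_adjMatrix_top {R : Type*} [CommRing R] [Nonempty V] :
    ((⊤ : SimpleGraph V).adjMatrix R).charpoly
      = (X + 1) ^ (Fintype.card V - 1) * (X - C ((Fintype.card V : R) - 1)) := by
  obtain ⟨k, hk⟩ : ∃ k, Fintype.card V = k + 1 := Nat.exists_eq_add_one.mpr Fintype.card_pos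
  have hJ : (⊤ : SimpleGraph V).adjMatrix R = vecMulVec 1 1 - scalar V 1 := by
    ext i j
    by_cases h : i = j <;> simp [h]
  rw [hJ, charpoly_sub_scalar, charpoly_vecMulVec, hk]
  simp only [pow_succ, one_dotProduct_one, hk, Nat.cast_add, Nat.cast_one, add_tsub_cancel_right,
    smul_eq_C_mul, map_add, map_natCast, map_one, sub_comp, mul_comp, pow_comp, X_comp, add_comp,
    natCast_comp, one_comp, add_sub_cancel_right]
  ring

lemma graphEnergy_top [Nonempty V] :
    graphEnergy (⊤ : SimpleGraph V) = 2 * ((Fintype.card V : ℝ) - 1) := by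
  have hne : (X + 1 : ℝ[X]) ^ (Fintype.card V - 1) * (X - C ((Fintype.card V : ℝ) - 1)) ≠ 0 :=
    (((monic_X_add_C 1).pow _).mul (monic_X_sub_C _)).ne_zero
  have hcard : (1 : ℝ) ≤ Fintype.card V := by exact_mod_cast Fintype.card_pos
  rw [graphEnergy_eq_sum_abs_roots, charpoly_adjMatrix_top, roots_mul hne, ← C_1, roots_pow,
    roots_X_add_C, roots_X_sub_C]
  simp only [Multiset.map_add, Multiset.map_nsmul, Multiset.map_singleton, abs_neg, abs_one,
    abs_of_nonneg (sub_nonneg.mpr hcard), Multiset.sum_add, Multiset.sum_nsmul,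
    Multiset.sum_singleton, nsmul_eq_mul, Nat.cast_sub Fintype.card_pos, Nat.cast_one, mul_one]
  ring

lemma localEnergy_top (hV : 2 ≤ Fintype.card V) :
    localEnergy (⊤ : SimpleGraph V) = 2 * Fintype.card V := by
  have hcard (v : V) : Fintype.card {u | u ≠ v} = Fintype.card V - 1 := Set.card_ne_eq v
  have : Nonempty V := Fintype.card_pos_iff.mp (by omega : 0 < Fintype.card V)
  have hv (v : V) : localEnergyAt (⊤ : SimpleGraph V) v = 2 := by
    have : Nonempty {u | u ≠ v} := Fintype.card_pos_iff.mp (by rw [hcard]; omega)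
    rw [localEnergyAt, ← completeGraph_eq_top, induce_top, completeGraph_eq_top, graphEnergy_top,
      graphEnergy_top, hcard, Nat.cast_sub (by omega)]
    ring
  simp [localEnergy, hv, mul_comm]

end SimpleGraph

/-- `e(K₄ ∪ S₄) = e(K₂ ∪ K₂ ∪ S₄)`. -/
theorem localEnergy_K4_S4 :
    localEnergy ((⊤ : SimpleGraph (Fin 4)) ⊕g starGraph4) =
      localEnergy (((⊤ : SimpleGraph (Fin 2)) ⊕g (⊤ : SimpleGraph (Fin 2)))
        ⊕g starGraph4) := by
  have hK4 : localEnergy (⊤ : SimpleGraph (Fin 4)) = 8 := by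
    rw [localEnergy_top (by simp)]
    norm_num
  have hK2 : localEnergy (⊤ : SimpleGraph (Fin 2)) = 4 := by
    rw [localEnergy_top (by simp)]
    norm_num
  simp only [localEnergy_sum, hK4, hK2]
  norm_num
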